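/- arXiv:2512.21751 — 4 statements merged into one kernel-verified Lean document; each statement's English description precedes it below -/
import Mathlib

section
/- Let V be a real inner product space with two inner products g and h, let e₁,…,eₙ be an h-orthonormal basis, and suppose |g(eᵢ,eⱼ) − δᵢⱼ| ≤ δ with nδ < 1. Then for every v ∈ V, √(1 − nδ)·‖v‖_h ≤ ‖v‖_g ≤ √(1 + nδ)·‖v‖_h, where ‖v‖_g = √(g(v,v)) and ‖v‖_h = √(h(v,v)). -/
/-!
Write `v = ∑ cᵢ eᵢ`. Orthonormality gives `h(v,v) = ∑ cᵢ²`, while the entries of the form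
`g - h` in the basis `e` are bounded by `δ`, so `|g(v,v) - h(v,v)| ≤ δ (∑ |cᵢ|)² ≤ nδ ∑ cᵢ²`
by Cauchy–Schwarz. Hence `(1 - nδ) h(v,v) ≤ g(v,v) ≤ (1 + nδ) h(v,v)`; take square roots.
-/

open Finset
open LinearMap (BilinForm)

namespace LinearMap.BilinForm

variable {R M ι : Type*} [Fintype ι]

section CommSemiring

variable [CommSemiring R] [AddCommMonoid M] [Module R M] (b : Module.Basis ι R M)

theorem apply_eq_sum_repr (B : BilinForm R M) (x y : M) :
    B x y = ∑ i, ∑ j, b.repr x i * B (b i) (b j) * b.repr y j := by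
  classical
  conv_lhs => rw [← Matrix.toBilin_toMatrix b B]
  simp only [Matrix.toBilin_apply, toMatrix_apply]

theorem apply_eq_sum_repr_mul_repr_of_orthonormal [DecidableEq ι] {B : BilinForm R M}
    (hB : ∀ i j, B (b i) (b j) = if i = j then 1 else 0) (x y : M) :
    B x y = ∑ i, b.repr x i * b.repr y i := by
  simp [apply_eq_sum_repr b B x y, hB]

end CommSemiring

variable [AddCommGroup M] [Module ℝ M] (b : Module.Basis ι ℝ M)

theorem abs_apply_le_of_abs_apply_basis_le {B : BilinForm ℝ M} {δ : ℝ}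
    (hB : ∀ i j, |B (b i) (b j)| ≤ δ) (x y : M) :
    |B x y| ≤ δ * (∑ i, |b.repr x i|) * ∑ j, |b.repr y j| := by
  calc |B x y| = |∑ i, ∑ j, b.repr x i * B (b i) (b j) * b.repr y j| := by
        rw [apply_eq_sum_repr b B x y]
    _ ≤ ∑ i, ∑ j, |b.repr x i| * δ * |b.repr y j| := by
        refine (abs_sum_le_sum_abs _ _).trans (sum_le_sum fun i _ => ?_)
        refine (abs_sum_le_sum_abs _ _).trans (sum_le_sum fun j _ => ?_)
        rw [abs_mul, abs_mul]
        gcongr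
        exact hB i j
    _ = δ * (∑ i, |b.repr x i|) * ∑ j, |b.repr y j| := by
        rw [mul_assoc, sum_mul_sum, mul_sum]
        exact sum_congr rfl fun i _ => by rw [mul_sum]; exact sum_congr rfl fun j _ => by ring

theorem abs_apply_self_le_card_mul_sum_sq {B : BilinForm ℝ M} {δ : ℝ} (hδ : 0 ≤ δ)
    (hB : ∀ i j, |B (b i) (b j)| ≤ δ) (x : M) :
    |B x x| ≤ Fintype.card ι * δ * ∑ i, b.repr x i ^ 2 := by
  have cauchySchwarz : (∑ i, |b.repr x i|) ^ 2 ≤ Fintype.card ι * ∑ i, b.repr x i ^ 2 := by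
    simpa only [sq_abs, card_univ] using
      sq_sum_le_card_mul_sum_sq (s := univ) (f := fun i => |b.repr x i|)
  calc |B x x| ≤ δ * (∑ i, |b.repr x i|) * ∑ i, |b.repr x i| :=
        abs_apply_le_of_abs_apply_basis_le b hB x x
    _ = δ * (∑ i, |b.repr x i|) ^ 2 := by ring
    _ ≤ δ * (Fintype.card ι * ∑ i, b.repr x i ^ 2) := by gcongr
    _ = Fintype.card ι * δ * ∑ i, b.repr x i ^ 2 := by ring

end LinearMap.BilinForm

theorem stmt_1_general {V : Type*} [AddCommGroup V] [Module ℝ V]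
    (n : ℕ) (g h : LinearMap.BilinForm ℝ V)
    (e : Module.Basis (Fin n) ℝ V)
    (horth : ∀ i j, h (e i) (e j) = if i = j then 1 else 0)
    (δ : ℝ) (hδ : 0 ≤ δ)
    (hclose : ∀ i j, |g (e i) (e j) - (if i = j then (1:ℝ) else 0)| ≤ δ) :
    ∀ v : V, Real.sqrt (1 - n * δ) * Real.sqrt (h v v) ≤ Real.sqrt (g v v)
      ∧ Real.sqrt (g v v) ≤ Real.sqrt (1 + n * δ) * Real.sqrt (h v v) := by
  intro v
  have hdiff : ∀ i j, |(g - h) (e i) (e j)| ≤ δ := by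
    simpa only [LinearMap.sub_apply, horth] using hclose
  have hv : h v v = ∑ i, e.repr v i ^ 2 := by
    rw [LinearMap.BilinForm.apply_eq_sum_repr_mul_repr_of_orthonormal e horth]
    simp only [sq]
  have hv_nonneg : 0 ≤ h v v := hv ▸ sum_nonneg fun i _ => sq_nonneg _
  have hgh : |g v v - h v v| ≤ n * δ * h v v := by
    simpa only [hv, Fintype.card_fin, LinearMap.sub_apply]
      using LinearMap.BilinForm.abs_apply_self_le_card_mul_sum_sq e hδ hdiff v
  obtain ⟨hlow, hhigh⟩ := abs_le.mp hgh
  rw [← Real.sqrt_mul' _ hv_nonneg, ← Real.sqrt_mul' _ hv_nonneg]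
  exact ⟨Real.sqrt_le_sqrt (by linarith), Real.sqrt_le_sqrt (by linarith)⟩

/-- If `e` is an `h`-orthonormal basis, `|g(eᵢ,eⱼ) − δᵢⱼ| ≤ δ` and `nδ < 1`,
then `√(1 − nδ)·‖v‖ₕ ≤ ‖v‖_g ≤ √(1 + nδ)·‖v‖ₕ`. -/
theorem stmt_1 {V : Type*} [AddCommGroup V] [Module ℝ V]
    (n : ℕ) (g h : LinearMap.BilinForm ℝ V)
    (hgsymm : g.IsSymm) (hhsymm : h.IsSymm)
    (hgpos : ∀ v : V, v ≠ 0 → 0 < g v v)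
    (hhpos : ∀ v : V, v ≠ 0 → 0 < h v v)
    (e : Module.Basis (Fin n) ℝ V)
    (horth : ∀ i j, h (e i) (e j) = if i = j then 1 else 0)
    (δ : ℝ) (hδ : 0 ≤ δ) (hδn : n * δ < 1)
    (hclose : ∀ i j, |g (e i) (e j) - (if i = j then (1:ℝ) else 0)| ≤ δ) :
    ∀ v : V, Real.sqrt (1 - n * δ) * Real.sqrt (h v v) ≤ Real.sqrt (g v v)
      ∧ Real.sqrt (g v v) ≤ Real.sqrt (1 + n * δ) * Real.sqrt (h v v) :=
  stmt_1_general n g h e horth δ hδ hclose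
end

section
/- Let u ∈ C_c^1(ℝⁿ) be compactly supported. Then for every x, u(x) = (1/(n ω_n)) Σᵢ ∫_{ℝⁿ} (xᵢ − yᵢ) (∂ᵢu)(y) / |x − y|ⁿ dy, and consequently |u(x)| ≤ (1/(n ω_n)) ∫_{ℝⁿ} |∇u(y)| / |x − y|^{n−1} dy. -/
/-!
Translate to `x` and pass to polar coordinates `y = x + r w`. The Jacobian `r ^ (n - 1)` cancels
the kernel: `r ^ (n - 1) * Du(x + r w)(-r w) / r ^ n = -d/dr u(x + r w)`, so by the fundamental
theorem of calculus every radial integral equals `u x`, and the sphere has measure `n ω`. The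
bound follows from `|Du(y)(x - y)| ≤ ‖Du(y)‖ ‖x - y‖`, the kernel `‖x - y‖ ^ (1 - n)` being
locally integrable.
-/

open Set Metric MeasureTheory Module

noncomputable section

section Polar

variable {E F : Type*} [NormedAddCommGroup E] [NormedSpace ℝ E] [FiniteDimensional ℝ E]
  [MeasurableSpace E] [BorelSpace E] [Nontrivial E] (μ : Measure E) [μ.IsAddHaarMeasure]
  [NormedAddCommGroup F] [NormedSpace ℝ F]

lemma integral_volumeIoiPow (m : ℕ) (g : ℝ → F) :
    ∫ r : Ioi (0 : ℝ), g r ∂(Measure.volumeIoiPow m) = ∫ r in Ioi (0 : ℝ), r ^ m • g r := by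
  simp only [Measure.volumeIoiPow, ENNReal.ofReal]
  rw [integral_withDensity_eq_integral_smul (measurable_subtype_coe.pow_const _).real_toNNReal,
    integral_subtype_comap measurableSet_Ioi fun r : ℝ => (r ^ m).toNNReal • g r]
  refine setIntegral_congr_fun measurableSet_Ioi fun r hr => ?_
  rw [NNReal.smul_def, Real.coe_toNNReal _ (pow_nonneg (le_of_lt hr) _)]

theorem integral_eq_integral_sphere_integral_Ioi {f : E → F} (hf : Integrable f μ) :
    ∫ y, f y ∂μ = ∫ w : sphere (0 : E) 1,
      (∫ r in Ioi (0 : ℝ), r ^ (finrank ℝ E - 1) • f (r • (w : E))) ∂μ.toSphere := by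
  have h0 : MeasurableSet ({0}ᶜ : Set E) := (measurableSet_singleton 0).compl
  have hpres := μ.measurePreserving_homeomorphUnitSphereProd
  have hemb := (homeomorphUnitSphereProd E).measurableEmbedding
  have hcomp : (fun p : sphere (0 : E) 1 × Ioi (0 : ℝ) => f ((p.2 : ℝ) • (p.1 : E))) ∘
      homeomorphUnitSphereProd E = f ∘ (Subtype.val : ({0}ᶜ : Set E) → E) := by
    funext v
    simp [smul_inv_smul₀ (norm_ne_zero_iff.2 v.2)]
  have hprod : Integrable (fun p : sphere (0 : E) 1 × Ioi (0 : ℝ) => f ((p.2 : ℝ) • (p.1 : E)))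
      (μ.toSphere.prod (.volumeIoiPow (finrank ℝ E - 1))) := by
    rw [← hpres.integrable_comp_emb hemb, hcomp,
      ← (MeasurableEmbedding.subtype_coe h0).integrable_map_iff, map_comap_subtype_coe h0,
      restrict_compl_singleton]
    exact hf
  calc ∫ y, f y ∂μ = ∫ v : ({0}ᶜ : Set E), f v ∂(μ.comap Subtype.val) := by
        rw [integral_subtype_comap h0, restrict_compl_singleton]
    _ = ∫ p : sphere (0 : E) 1 × Ioi (0 : ℝ), f ((p.2 : ℝ) • (p.1 : E))
          ∂(μ.toSphere.prod (.volumeIoiPow (finrank ℝ E - 1))) := by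
        rw [← hpres.integral_comp hemb]
        exact congrArg (fun g => ∫ v, g v ∂(μ.comap Subtype.val)) hcomp.symm
    _ = _ := by
        rw [integral_prod _ hprod]
        congr 1 with w
        exact integral_volumeIoiPow _ fun r => f (r • (w : E))

end Polar

theorem integral_Ioi_fderiv_apply_line {E : Type*} [NormedAddCommGroup E] [NormedSpace ℝ E]
    {u : E → ℝ} (hu : ContDiff ℝ 1 u) (hc : HasCompactSupport u) (x : E) {w : E} (hw : w ≠ 0) :
    ∫ r in Ioi (0 : ℝ), fderiv ℝ u (x + r • w) w = -u x := by
  have hline : Topology.IsClosedEmbedding fun r : ℝ => x + r • w :=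
    (Homeomorph.addLeft x).isClosedEmbedding.comp (isClosedEmbedding_smul_left hw)
  have hderiv (r : ℝ) : deriv (fun t : ℝ => u (x + t • w)) r = fderiv ℝ u (x + r • w) w := by
    have hline' : HasDerivAt (fun t : ℝ => x + t • w) w r := by
      simpa using ((hasDerivAt_id r).smul_const w).const_add x
    exact ((hu.differentiable one_ne_zero _).hasFDerivAt.comp_hasDerivAt r hline').deriv
  have hsupp : HasCompactSupport fun t : ℝ => u (x + t • w) := hc.comp_isClosedEmbedding hline
  have hsmooth : ContDiff ℝ 1 fun t : ℝ => u (x + t • w) := hu.comp (by fun_prop)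
  simpa only [hderiv, zero_smul, add_zero] using hsupp.integral_Ioi_deriv_eq hsmooth 0

lemma abs_div_pow_le_div_rpow {t c s : ℝ} {d : ℕ} (hc : 0 ≤ c) (hs : 0 ≤ s)
    (ht : |t| ≤ c * s) : |t / s ^ d| ≤ c / s ^ ((d : ℝ) - 1) := by
  rcases hs.eq_or_lt with rfl | hs
  · have : t = 0 := abs_nonpos_iff.1 (by simpa using ht)
    simp only [this, zero_div, abs_zero]
    positivity
  · rw [Real.rpow_sub_one hs.ne', Real.rpow_natCast, div_div_eq_mul_div, abs_div,
      abs_of_pos (pow_pos hs d)]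
    gcongr

section RieszKernel

variable {E G : Type*} [NormedAddCommGroup E] [NormedSpace ℝ E] [FiniteDimensional ℝ E]
  [MeasurableSpace E] [BorelSpace E] [Nontrivial E] {μ : Measure E} [μ.IsAddHaarMeasure]
  [NormedAddCommGroup G]

theorem integrable_div_norm_sub_rpow {g : E → ℝ} (hg : Continuous g) (hgc : HasCompactSupport g)
    (x : E) : Integrable (fun y => g y / ‖x - y‖ ^ ((finrank ℝ E : ℝ) - 1)) μ := by
  have hkernel : LocallyIntegrable (fun z : E => ‖z‖ ^ (-((finrank ℝ E : ℝ) - 1))) μ :=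
    locallyIntegrable_of_norm_le_rpow (C := 1) (α := (finrank ℝ E : ℝ) - 1) finrank_pos
      (by linarith)
      (ae_of_all _ fun z => by simp [abs_of_nonneg (Real.rpow_nonneg (norm_nonneg z) _)])
      (continuous_norm.measurable.pow_const _).aestronglyMeasurable
  have hgx : HasCompactSupport fun z => g (x - z) :=
    hgc.comp_isClosedEmbedding (Homeomorph.subLeft x).isClosedEmbedding
  refine ((hkernel.integrable_smul_left_of_hasCompactSupport (by fun_prop) hgx).comp_sub_left
    x).congr (ae_of_all _ fun y => ?_)
  simp only [sub_sub_cancel, smul_eq_mul, Real.rpow_neg (norm_nonneg _), div_eq_mul_inv]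

theorem integrable_div_norm_sub_pow_of_abs_le {g : E → G} (hg : Continuous g)
    (hgc : HasCompactSupport g) (x : E) {F : E → ℝ} (hF : Continuous F)
    (hFg : ∀ y, |F y| ≤ ‖g y‖ * ‖x - y‖) :
    Integrable (fun y => F y / ‖x - y‖ ^ finrank ℝ E) μ :=
  (integrable_div_norm_sub_rpow hg.norm hgc.norm x).mono'
    (hF.measurable.div (by fun_prop)).aestronglyMeasurable
    (ae_of_all _ fun y => abs_div_pow_le_div_rpow (norm_nonneg _) (norm_nonneg _) (hFg y))

theorem integral_fderiv_apply_sub_div_norm_pow {u : E → ℝ} (hu : ContDiff ℝ 1 u)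
    (hc : HasCompactSupport u) (x : E) :
    ∫ y, fderiv ℝ u y (x - y) / ‖x - y‖ ^ finrank ℝ E ∂μ =
      finrank ℝ E * μ.real (ball 0 1) * u x := by
  set d := finrank ℝ E
  have hD := hu.continuous_fderiv one_ne_zero
  have hint : Integrable (fun y => fderiv ℝ u y (x - y) / ‖x - y‖ ^ d) μ :=
    integrable_div_norm_sub_pow_of_abs_le hD (hc.fderiv ℝ) x (by fun_prop)
      fun y => (fderiv ℝ u y).le_opNorm (x - y)
  have hradial (w : sphere (0 : E) 1) :
      ∫ r in Ioi (0 : ℝ), r ^ (d - 1) •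
        (fderiv ℝ u (x + r • (w : E)) (x - (x + r • (w : E))) / ‖x - (x + r • (w : E))‖ ^ d)
        = u x := by
    have hw : ‖(w : E)‖ = 1 := norm_eq_of_mem_sphere w
    rw [← neg_neg (u x), ← integral_Ioi_fderiv_apply_line hu hc x (ne_zero_of_mem_unit_sphere w),
      ← integral_neg]
    refine setIntegral_congr_fun measurableSet_Ioi fun r (hr : 0 < r) => ?_
    rw [sub_add_cancel_left, norm_neg, norm_smul, hw, mul_one, Real.norm_of_nonneg hr.le,
      map_neg, map_smul, smul_eq_mul, smul_eq_mul, ← pow_sub_one_mul finrank_pos.ne' r]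
    field_simp
    ring
  calc ∫ y, fderiv ℝ u y (x - y) / ‖x - y‖ ^ d ∂μ
      = ∫ z, fderiv ℝ u (x + z) (x - (x + z)) / ‖x - (x + z)‖ ^ d ∂μ :=
        (integral_add_left_eq_self _ x).symm
    _ = ∫ _ : sphere (0 : E) 1, u x ∂μ.toSphere := by
        rw [integral_eq_integral_sphere_integral_Ioi μ (hint.comp_add_left x)]
        exact integral_congr_ae (ae_of_all _ hradial)
    _ = d * μ.real (ball 0 1) * u x := by
        rw [integral_const, μ.toSphere_real_apply_univ, smul_eq_mul]

end RieszKernel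

lemma ContinuousLinearMap.apply_eq_sum_mul_single {ι : Type*} [Fintype ι] [DecidableEq ι]
    (L : EuclideanSpace ℝ ι →L[ℝ] ℝ) (v : EuclideanSpace ℝ ι) :
    L v = ∑ i, v i * L (EuclideanSpace.single i 1) := by
  conv_lhs => rw [← (EuclideanSpace.basisFun ι ℝ).sum_repr v]
  simp [map_sum]

lemma abs_sub_apply_mul_apply_single_le {ι : Type*} [Fintype ι] [DecidableEq ι]
    (L : EuclideanSpace ℝ ι →L[ℝ] ℝ) (x y : EuclideanSpace ℝ ι) (i : ι) :
    |(x i - y i) * L (EuclideanSpace.single i 1)| ≤ ‖L‖ * ‖x - y‖ := by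
  have hcoord : |x i - y i| ≤ ‖x - y‖ := by simpa using PiLp.norm_apply_le (x - y) i
  have hL : |L (EuclideanSpace.single i 1)| ≤ ‖L‖ := by
    simpa using L.le_opNorm (EuclideanSpace.single i 1)
  rw [abs_mul, mul_comm]
  exact mul_le_mul hL hcoord (abs_nonneg _) (norm_nonneg _)

/-- representation of a compactly supported `C¹` function via its gradient,
and the resulting Riesz-potential bound. -/
theorem stmt_9 (n : ℕ) (hn : 2 ≤ n)
    (u : EuclideanSpace ℝ (Fin n) → ℝ) (hu : ContDiff ℝ 1 u) (hc : HasCompactSupport u)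
    (ω : ℝ) (hω : ω = (MeasureTheory.volume (Metric.ball (0 : EuclideanSpace ℝ (Fin n)) 1)).toReal)
    (x : EuclideanSpace ℝ (Fin n)) :
    u x = (1 / (n * ω)) * ∑ i : Fin n,
        ∫ y, (x i - y i) * fderiv ℝ u y (EuclideanSpace.single i 1) / ‖x - y‖ ^ n
    ∧ |u x| ≤ (1 / (n * ω)) * ∫ y, ‖fderiv ℝ u y‖ / ‖x - y‖ ^ ((n:ℝ) - 1) := by
  have : Nonempty (Fin n) := ⟨⟨0, by omega⟩⟩
  have hdim : finrank ℝ (EuclideanSpace ℝ (Fin n)) = n := finrank_euclideanSpace_fin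
  have hω_pos : 0 < ω :=
    hω ▸ ENNReal.toReal_pos (measure_ball_pos _ _ one_pos).ne' measure_ball_lt_top.ne
  have hn_pos : (0 : ℝ) < n := by exact_mod_cast (by omega : 0 < n)
  have hux : u x = 1 / (n * ω) * ∫ y, fderiv ℝ u y (x - y) / ‖x - y‖ ^ n := by
    have hrep := integral_fderiv_apply_sub_div_norm_pow (μ := volume) hu hc x
    rw [hdim, measureReal_def, ← hω] at hrep
    rw [hrep]
    field_simp
  have hD := hu.continuous_fderiv one_ne_zero
  refine ⟨?_, ?_⟩
  · rw [hux, ← integral_finsetSum _ fun i _ => ?_]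
    · simp only [ContinuousLinearMap.apply_eq_sum_mul_single _ (x - _), PiLp.sub_apply,
        Finset.sum_div]
    · simpa only [hdim] using integrable_div_norm_sub_pow_of_abs_le hD (hc.fderiv ℝ) x
        (by fun_prop) fun y => abs_sub_apply_mul_apply_single_le _ x y i
  · rw [hux, abs_mul, abs_of_pos (by positivity)]
    gcongr
    rw [← Real.norm_eq_abs]
    refine norm_integral_le_of_norm_le ?_ (ae_of_all _ fun y => ?_)
    · simpa only [hdim] using integrable_div_norm_sub_rpow hD.norm (hc.fderiv ℝ).norm x
    · exact abs_div_pow_le_div_rpow (norm_nonneg _) (norm_nonneg _)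
        ((fderiv ℝ u y).le_opNorm (x - y))
end
end

section
/- Let Ω ⊂ ℝⁿ be a set of finite measure and 0 < μ ≤ 1. For f ∈ L^p(Ω) define (V_μ f)(x) = ∫_Ω |x−y|^{n(μ−1)} f(y) dy. If 0 ≤ δ := 1/p − 1/q < μ (1 ≤ p ≤ q < ∞), then ‖V_μ f‖_{L^q(Ω)} ≤ ((1−δ)/(μ−δ))^{1−δ} ω_n^{1−μ} |Ω|^{μ−δ} ‖f‖_{L^p(Ω)}. -/
/-!
Put `1/r = 1 - δ`, so that `1/p + 1/r = 1 + 1/q`. Young's inequality for integral operators,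
proved by Hölder's inequality with the three weights `1/q`, `1 - 1/p`, `1 - 1/r` followed by
Tonelli, bounds `‖V_μ f‖_q` by `M^(1/r) ‖f‖_p`, where `M` bounds the `L^r(Ω)` norms of the
kernel `|x - y|^(n(μ-1))` in either variable. The `r`-th power of the kernel is radially
decreasing in `y - x`, so by the bathtub principle its integral over `Ω` is at most its integral
over the ball `B` centred at `x` with `|B| = |Ω|`. In polar coordinates that integral is
`ω_n (1-δ)/(μ-δ) R^(n(μ-δ)/(1-δ))` with `ω_n R^n = |Ω|`, and its `(1-δ)`-th power is the constant.
-/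

open MeasureTheory Set Metric
open scoped ENNReal

section Young

variable {α β : Type*} [MeasurableSpace α] [MeasurableSpace β]

theorem ENNReal.rpow_rpow_mul_rpow_rpow {r u v : ℝ} (a : ℝ≥0∞) (hr : 0 < r) (hu : 0 ≤ u)
    (hv : 0 ≤ v) (huv : u + v = 1 / r) : (a ^ r) ^ u * (a ^ r) ^ v = a := by
  rw [← ENNReal.rpow_add_of_nonneg _ _ hu hv, ← ENNReal.rpow_mul, huv, mul_one_div_cancel hr.ne',
    ENNReal.rpow_one]

theorem ENNReal.rpow_rpow_eq_mul_rpow_rpow {q u v : ℝ} (x : ℝ≥0∞) (hq : 0 < q) (hu : 0 ≤ u)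
    (huv : 1 / q + u = v) : (x ^ v) ^ q = x * (x ^ u) ^ q := by
  rw [← ENNReal.rpow_mul, ← ENNReal.rpow_mul, ← huv, add_mul, one_div_mul_cancel hq.ne',
    ENNReal.rpow_add_of_nonneg _ _ zero_le_one (mul_nonneg hu hq.le), ENNReal.rpow_one]

theorem lintegral_mul_le_young_holder (ν : Measure β) {a b : β → ℝ≥0∞} (ha : AEMeasurable a ν)
    (hb : AEMeasurable b ν) {p q r : ℝ} (hp : 1 ≤ p) (hq : 0 < q) (hr : 1 ≤ r)
    (hpqr : 1 / p + 1 / r = 1 + 1 / q) :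
    ∫⁻ y, a y * b y ∂ν ≤ (∫⁻ y, a y ^ r * b y ^ p ∂ν) ^ (1 / q)
      * (∫⁻ y, a y ^ r ∂ν) ^ (1 - 1 / p) * (∫⁻ y, b y ^ p ∂ν) ^ (1 - 1 / r) := by
  have hq' : 0 ≤ 1 / q := by positivity
  have hp' : 0 ≤ 1 - 1 / p := by rw [sub_nonneg, div_le_one (by linarith)]; exact hp
  have hr' : 0 ≤ 1 - 1 / r := by rw [sub_nonneg, div_le_one (by linarith)]; exact hr
  have hholder := ENNReal.lintegral_prod_norm_pow_le (μ := ν) Finset.univ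
    (f := ![fun y => a y ^ r * b y ^ p, fun y => a y ^ r, fun y => b y ^ p])
    (p := ![1 / q, 1 - 1 / p, 1 - 1 / r])
    (by intro i _; fin_cases i <;> simp only [Fin.reduceFinMk, Matrix.cons_val] <;> fun_prop)
    (by simp only [Fin.sum_univ_three, Matrix.cons_val]; linarith)
    (by intro i _; fin_cases i <;> simp only [Fin.reduceFinMk, Matrix.cons_val] <;> assumption)
  simp only [Fin.prod_univ_three, Matrix.cons_val] at hholder
  refine le_of_eq_of_le (lintegral_congr fun y => ?_) hholder
  calc a y * b y
      = ((a y ^ r) ^ (1 / q) * (a y ^ r) ^ (1 - 1 / p))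
        * ((b y ^ p) ^ (1 / q) * (b y ^ p) ^ (1 - 1 / r)) := by
        rw [ENNReal.rpow_rpow_mul_rpow_rpow _ (by linarith) hq' hp' (by linarith),
          ENNReal.rpow_rpow_mul_rpow_rpow _ (by linarith) hq' hr' (by linarith)]
    _ = _ := by rw [ENNReal.mul_rpow_of_nonneg _ _ hq']; ring

theorem lintegral_kernel_young (μ : Measure α) (ν : Measure β) [SFinite μ] [SFinite ν]
    {K : α → β → ℝ≥0∞} (hK : Measurable (Function.uncurry K)) {F : β → ℝ≥0∞}
    (hF : AEMeasurable F ν) {p q r : ℝ} (hp : 1 ≤ p) (hq : 0 < q) (hr : 1 ≤ r)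
    (hpqr : 1 / p + 1 / r = 1 + 1 / q) {M : ℝ≥0∞} (hrow : ∀ x, ∫⁻ y, K x y ^ r ∂ν ≤ M)
    (hcol : ∀ y, ∫⁻ x, K x y ^ r ∂μ ≤ M) :
    (∫⁻ x, (∫⁻ y, K x y * F y ∂ν) ^ q ∂μ) ^ (1 / q)
      ≤ M ^ (1 / r) * (∫⁻ y, F y ^ p ∂ν) ^ (1 / p) := by
  have hp' : 0 ≤ 1 - 1 / p := by rw [sub_nonneg, div_le_one (by linarith)]; exact hp
  have hr' : 0 ≤ 1 - 1 / r := by rw [sub_nonneg, div_le_one (by linarith)]; exact hr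
  set I := ∫⁻ y, F y ^ p ∂ν
  set C := M ^ (1 - 1 / p) * I ^ (1 - 1 / r)
  have hKF : AEMeasurable (fun z : α × β => K z.1 z.2 ^ r * F z.2 ^ p) (μ.prod ν) :=
    (hK.pow_const r).aemeasurable.mul (hF.comp_snd.pow_const p)
  have hpointwise : ∀ x, (∫⁻ y, K x y * F y ∂ν) ^ q ≤ (∫⁻ y, K x y ^ r * F y ^ p ∂ν) * C ^ q := by
    intro x
    have hholder := lintegral_mul_le_young_holder ν (hK.of_uncurry_left (x := x)).aemeasurable hF
      hp hq hr hpqr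
    calc (∫⁻ y, K x y * F y ∂ν) ^ q
        ≤ ((∫⁻ y, K x y ^ r * F y ^ p ∂ν) ^ (1 / q) * C) ^ q := by
          gcongr
          refine hholder.trans ?_
          rw [mul_assoc]
          show _ ≤ _ * (M ^ (1 - 1 / p) * I ^ (1 - 1 / r))
          gcongr
          exact hrow x
      _ = (∫⁻ y, K x y ^ r * F y ^ p ∂ν) * C ^ q := by
          rw [ENNReal.mul_rpow_of_nonneg _ _ hq.le, ← ENNReal.rpow_mul, one_div_mul_cancel hq.ne',
            ENNReal.rpow_one]
  have htonelli : ∫⁻ x, ∫⁻ y, K x y ^ r * F y ^ p ∂ν ∂μ ≤ M * I :=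
    calc ∫⁻ x, ∫⁻ y, K x y ^ r * F y ^ p ∂ν ∂μ
        = ∫⁻ y, (∫⁻ x, K x y ^ r ∂μ) * F y ^ p ∂ν := by
          rw [lintegral_lintegral_swap hKF]
          exact lintegral_congr fun y => lintegral_mul_const _ (hK.of_uncurry_right.pow_const r)
      _ ≤ ∫⁻ y, M * F y ^ p ∂ν := by gcongr with y; exact hcol y
      _ = M * I := lintegral_const_mul'' M (hF.pow_const p)
  have hbound : ∫⁻ x, (∫⁻ y, K x y * F y ∂ν) ^ q ∂μ ≤ (M ^ (1 / r) * I ^ (1 / p)) ^ q :=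
    calc ∫⁻ x, (∫⁻ y, K x y * F y ∂ν) ^ q ∂μ
        ≤ ∫⁻ x, (∫⁻ y, K x y ^ r * F y ^ p ∂ν) * C ^ q ∂μ := lintegral_mono hpointwise
      _ = (∫⁻ x, ∫⁻ y, K x y ^ r * F y ^ p ∂ν ∂μ) * C ^ q :=
          lintegral_mul_const'' _ hKF.lintegral_prod_right'
      _ ≤ M * I * C ^ q := by gcongr
      _ = (M ^ (1 / r) * I ^ (1 / p)) ^ q := by
          rw [ENNReal.mul_rpow_of_nonneg _ _ hq.le, ENNReal.mul_rpow_of_nonneg _ _ hq.le,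
            ENNReal.rpow_rpow_eq_mul_rpow_rpow (v := 1 / r) M hq hp' (by linarith),
            ENNReal.rpow_rpow_eq_mul_rpow_rpow (v := 1 / p) I hq hr' (by linarith)]
          ring
  calc (∫⁻ x, (∫⁻ y, K x y * F y ∂ν) ^ q ∂μ) ^ (1 / q)
      ≤ ((M ^ (1 / r) * I ^ (1 / p)) ^ q) ^ (1 / q) := by gcongr
    _ = M ^ (1 / r) * I ^ (1 / p) := by
        rw [← ENNReal.rpow_mul, mul_one_div_cancel hq.ne', ENNReal.rpow_one]

end Young

section Integrals

variable {α : Type*} [MeasurableSpace α] (μ : Measure α)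

theorem ofReal_integral_abs_rpow_rpow_le (g : α → ℝ) {q : ℝ} (hq : 0 < q) :
    ENNReal.ofReal ((∫ x, |g x| ^ q ∂μ) ^ (1 / q)) ≤ (∫⁻ x, ‖g x‖ₑ ^ q ∂μ) ^ (1 / q) := by
  rw [← ENNReal.ofReal_rpow_of_nonneg (integral_nonneg fun x => by positivity) (by positivity)]
  gcongr
  calc ENNReal.ofReal (∫ x, |g x| ^ q ∂μ) ≤ ‖∫ x, |g x| ^ q ∂μ‖ₑ := by
        rw [Real.enorm_eq_ofReal_abs]; exact ENNReal.ofReal_le_ofReal (le_abs_self _)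
    _ ≤ ∫⁻ x, ‖|g x| ^ q‖ₑ ∂μ := enorm_integral_le_lintegral_enorm _
    _ = ∫⁻ x, ‖g x‖ₑ ^ q ∂μ := by
        congr with x
        rw [Real.enorm_of_nonneg (by positivity), Real.enorm_eq_ofReal_abs,
          ENNReal.ofReal_rpow_of_nonneg (abs_nonneg _) hq.le]

theorem MeasureTheory.MemLp.ofReal_integral_abs_rpow_rpow {f : α → ℝ} {p : ℝ} (hp : 0 < p)
    (hf : MemLp f (ENNReal.ofReal p) μ) :
    ENNReal.ofReal ((∫ x, |f x| ^ p ∂μ) ^ (1 / p)) = (∫⁻ x, ‖f x‖ₑ ^ p ∂μ) ^ (1 / p) := by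
  have hp' : ENNReal.ofReal p ≠ 0 := ENNReal.ofReal_ne_zero_iff.mpr hp
  have h := hf.eLpNorm_eq_integral_rpow_norm hp' ENNReal.ofReal_ne_top
  rw [eLpNorm_eq_eLpNorm' hp' ENNReal.ofReal_ne_top, eLpNorm'_eq_lintegral_enorm,
    ENNReal.toReal_ofReal hp.le] at h
  simpa only [Real.norm_eq_abs, one_div] using h.symm

theorem setLIntegral_le_setLIntegral_of_bathtub {s t : Set α} (hs : MeasurableSet s)
    (ht : MeasurableSet t) (ht_fin : μ t ≠ ⊤) (hst : μ s ≤ μ t) {f : α → ℝ≥0∞} {c : ℝ≥0∞}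
    (h_out : ∀ x ∉ t, f x ≤ c) (h_in : ∀ᵐ x ∂μ.restrict t, c ≤ f x) :
    ∫⁻ x in s, f x ∂μ ≤ ∫⁻ x in t, f x ∂μ := by
  have hdiff : μ (s \ t) ≤ μ (t \ s) := by
    have hfin : μ (s ∩ t) ≠ ⊤ := ne_top_of_le_ne_top ht_fin (measure_mono inter_subset_right)
    rw [← measure_inter_add_sdiff s ht, ← measure_inter_add_sdiff t hs, inter_comm t] at hst
    exact (ENNReal.add_le_add_iff_left hfin).mp hst
  have h_out' : ∫⁻ x in s \ t, f x ∂μ ≤ c * μ (s \ t) := by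
    rw [← setLIntegral_const]
    exact setLIntegral_mono measurable_const fun x hx => h_out x hx.2
  have h_in' : c * μ (t \ s) ≤ ∫⁻ x in t \ s, f x ∂μ := by
    rw [← setLIntegral_const]
    exact lintegral_mono_ae (ae_restrict_of_ae_restrict_of_subset sdiff_subset h_in)
  calc ∫⁻ x in s, f x ∂μ = ∫⁻ x in s ∩ t, f x ∂μ + ∫⁻ x in s \ t, f x ∂μ :=
        (lintegral_inter_add_sdiff f s ht).symm
    _ ≤ ∫⁻ x in t ∩ s, f x ∂μ + ∫⁻ x in t \ s, f x ∂μ := by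
        rw [inter_comm]
        exact add_le_add le_rfl (h_out'.trans ((mul_le_mul_right hdiff c).trans h_in'))
    _ = ∫⁻ x in t, f x ∂μ := lintegral_inter_add_sdiff f t hs

end Integrals

theorem pow_sub_one_mul_rpow {k : ℕ} (hk : 1 ≤ k) {y : ℝ} (hy : 0 < y) (c : ℝ) :
    y ^ (k - 1) * y ^ c = y ^ ((k : ℝ) - 1 + c) := by
  rw [← Real.rpow_natCast, ← Real.rpow_add hy, Nat.cast_sub hk, Nat.cast_one]

theorem measureReal_ball_pos {E : Type*} [NormedAddCommGroup E] [NormedSpace ℝ E]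
    [MeasurableSpace E] [BorelSpace E] [FiniteDimensional ℝ E] (μ : Measure E)
    [μ.IsAddHaarMeasure] (x : E) {r : ℝ} (hr : 0 < r) : 0 < μ.real (ball x r) :=
  ENNReal.toReal_pos (measure_ball_pos μ x hr).ne' measure_ball_lt_top.ne

section AddHaar

variable {E : Type*} [NormedAddCommGroup E] [NormedSpace ℝ E] [MeasurableSpace E] [BorelSpace E]
  [FiniteDimensional ℝ E] [Nontrivial E] (μ : Measure E) [μ.IsAddHaarMeasure]

theorem integrableOn_ball_norm_rpow {R c : ℝ} (hc : -(Module.finrank ℝ E : ℝ) < c) :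
    IntegrableOn (fun x : E => ‖x‖ ^ c) (ball 0 R) μ := by
  rw [integrableOn_fun_norm_addHaar μ (f := fun t => t ^ c)]
  refine IntegrableOn.congr_fun ?_
    (fun y hy => (pow_sub_one_mul_rpow Module.finrank_pos hy.1 c).symm) measurableSet_Ioo
  exact (intervalIntegral.intervalIntegrable_rpow' (by linarith) (a := 0) (b := R)).def'.mono_set
    (Ioo_subset_Ioc_self.trans Ioc_subset_uIoc)

theorem integral_ball_norm_rpow {R c : ℝ} (hR : 0 ≤ R) (hc : -(Module.finrank ℝ E : ℝ) < c) :
    ∫ x in ball (0 : E) R, ‖x‖ ^ c ∂μ = μ.real (ball 0 1)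
      * (Module.finrank ℝ E / (Module.finrank ℝ E + c) * R ^ ((Module.finrank ℝ E : ℝ) + c)) := by
  have hind : ∀ x : E, (ball (0 : E) R).indicator (fun x => ‖x‖ ^ c) x
      = (Iio R).indicator (fun t => t ^ c) ‖x‖ := by
    intro x; by_cases hx : ‖x‖ < R <;> simp [indicator, hx]
  rw [← integral_indicator measurableSet_ball, funext hind,
    integral_fun_norm_addHaar μ (fun t => (Iio R).indicator (fun t => t ^ c) t)]
  have hradial : ∫ y in Ioi (0 : ℝ),
        y ^ (Module.finrank ℝ E - 1) • (Iio R).indicator (fun t => t ^ c) y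
      = R ^ ((Module.finrank ℝ E : ℝ) + c) / (Module.finrank ℝ E + c) :=
    calc _ = ∫ y in Ioi (0 : ℝ),
          (Iio R).indicator (fun t => t ^ ((Module.finrank ℝ E : ℝ) - 1 + c)) y := by
          refine setIntegral_congr_fun measurableSet_Ioi fun y hy => ?_
          by_cases hyR : y < R <;> simp [indicator, hyR, pow_sub_one_mul_rpow Module.finrank_pos hy]
      _ = ∫ y in (0 : ℝ)..R, y ^ ((Module.finrank ℝ E : ℝ) - 1 + c) := by
          rw [setIntegral_indicator measurableSet_Iio, Ioi_inter_Iio,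
            ← integral_Ioc_eq_integral_Ioo, intervalIntegral.integral_of_le hR]
      _ = _ := by
          rw [integral_rpow (Or.inl (by linarith)), Real.zero_rpow (by linarith)]
          ring_nf
  have hd : (0 : ℝ) < Module.finrank ℝ E + c := by linarith
  rw [hradial, nsmul_eq_mul, smul_eq_mul]
  field_simp

theorem lintegral_ball_norm_rpow {R c : ℝ} (hR : 0 ≤ R) (hc : -(Module.finrank ℝ E : ℝ) < c) :
    ∫⁻ x in ball (0 : E) R, ENNReal.ofReal (‖x‖ ^ c) ∂μ
      = ENNReal.ofReal (μ.real (ball 0 1) * (Module.finrank ℝ E / (Module.finrank ℝ E + c)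
          * R ^ ((Module.finrank ℝ E : ℝ) + c))) := by
  rw [← integral_ball_norm_rpow μ hR hc, ofReal_integral_eq_lintegral_ofReal
    (integrableOn_ball_norm_rpow μ hc) (ae_of_all _ fun x => by positivity)]

theorem setLIntegral_norm_sub_rpow_le_ball {s : Set E} (hs : MeasurableSet s) {R c : ℝ}
    (hc : c ≤ 0) (hsR : μ s ≤ μ (ball 0 R)) (x : E) :
    ∫⁻ y in s, ENNReal.ofReal (‖x - y‖ ^ c) ∂μ
      ≤ ∫⁻ z in ball (0 : E) R, ENNReal.ofReal (‖z‖ ^ c) ∂μ := by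
  rcases le_or_gt R 0 with hR | hR
  · have hs0 : μ s = 0 := by simpa [ball_eq_empty.mpr hR] using hsR
    simp [setLIntegral_measure_zero _ _ hs0]
  have hball : (fun y => x - y) ⁻¹' ball (0 : E) R = ball x R := by
    ext y; simp [dist_eq_norm, norm_sub_rev]
  rw [← (Measure.measurePreserving_sub_left μ x).setLIntegral_comp_preimage_emb
    (MeasurableEquiv.subLeft x).measurableEmbedding (fun z => ENNReal.ofReal (‖z‖ ^ c)), hball]
  refine setLIntegral_le_setLIntegral_of_bathtub μ hs measurableSet_ball measure_ball_lt_top.ne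
    (by rwa [Measure.addHaar_ball_center]) (c := ENNReal.ofReal (R ^ c)) (fun y hy => ?_) ?_
  · refine ENNReal.ofReal_le_ofReal (Real.rpow_le_rpow_of_nonpos hR ?_ hc)
    simpa [dist_eq_norm, norm_sub_rev] using hy
  · have hx : ∀ᵐ y ∂μ.restrict (ball x R), y ≠ x := ae_restrict_of_ae (Measure.ae_ne μ x)
    filter_upwards [ae_restrict_mem measurableSet_ball, hx] with y hy hyx
    refine ENNReal.ofReal_le_ofReal (Real.rpow_le_rpow_of_nonpos ?_ ?_ hc)
    · exact norm_pos_iff.mpr (sub_ne_zero.mpr (Ne.symm hyx))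
    · simpa [dist_eq_norm, norm_sub_rev] using (mem_ball.mp hy).le

theorem addHaar_ball_rpow_inv_finrank_eq {s : Set E} (hs : μ s ≠ ⊤) :
    μ (ball 0 ((μ.real s / μ.real (ball 0 1)) ^ (Module.finrank ℝ E : ℝ)⁻¹)) = μ s := by
  have hω := measureReal_ball_pos μ (0 : E) one_pos
  have hd : (Module.finrank ℝ E : ℝ) ≠ 0 := by exact_mod_cast Module.finrank_pos.ne'
  rw [Measure.addHaar_ball μ 0 (by positivity), ← Real.rpow_natCast,
    ← Real.rpow_mul (by positivity), inv_mul_cancel₀ hd, Real.rpow_one,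
    ENNReal.ofReal_div_of_pos hω, Measure.real, ENNReal.ofReal_toReal hs, Measure.real,
    ENNReal.ofReal_toReal measure_ball_lt_top.ne,
    ENNReal.div_mul_cancel (measure_ball_pos μ 0 one_pos).ne' measure_ball_lt_top.ne]

theorem integral_abs_riesz_potential_rpow_le {Ω : Set E} (hΩ : MeasurableSet Ω) {R : ℝ}
    (hR : 0 ≤ R) (hΩR : μ Ω ≤ μ (ball 0 R)) {a p q r : ℝ} (hp : 1 ≤ p) (hq : 0 < q) (hr : 1 ≤ r)
    (hpqr : 1 / p + 1 / r = 1 + 1 / q) (ha : a ≤ 0) (hdar : -(Module.finrank ℝ E : ℝ) < a * r)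
    {f : E → ℝ} (hf : MemLp f (ENNReal.ofReal p) (μ.restrict Ω)) :
    (∫ x in Ω, |∫ y in Ω, ‖x - y‖ ^ a * f y ∂μ| ^ q ∂μ) ^ (1 / q)
      ≤ (μ.real (ball 0 1) * (Module.finrank ℝ E / (Module.finrank ℝ E + a * r)
          * R ^ ((Module.finrank ℝ E : ℝ) + a * r))) ^ (1 / r)
        * (∫ x in Ω, |f x| ^ p ∂μ) ^ (1 / p) := by
  have hr0 : 0 < r := by linarith
  have hM : 0 ≤ μ.real (ball 0 1) * (Module.finrank ℝ E / (Module.finrank ℝ E + a * r)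
      * R ^ ((Module.finrank ℝ E : ℝ) + a * r)) := by
    have : (0 : ℝ) < Module.finrank ℝ E + a * r := by linarith
    positivity
  have hrow : ∀ x, ∫⁻ y in Ω, ENNReal.ofReal (‖x - y‖ ^ a) ^ r ∂μ
      ≤ ENNReal.ofReal (μ.real (ball 0 1) * (Module.finrank ℝ E / (Module.finrank ℝ E + a * r)
          * R ^ ((Module.finrank ℝ E : ℝ) + a * r))) := by
    intro x
    have hpow : ∀ y, ENNReal.ofReal (‖x - y‖ ^ a) ^ r = ENNReal.ofReal (‖x - y‖ ^ (a * r)) :=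
      fun y => by
        rw [ENNReal.ofReal_rpow_of_nonneg (by positivity) hr0.le, ← Real.rpow_mul (norm_nonneg _)]
    simp only [hpow]
    rw [← lintegral_ball_norm_rpow μ hR hdar]
    exact setLIntegral_norm_sub_rpow_le_ball μ hΩ (mul_nonpos_of_nonpos_of_nonneg ha hr0.le) hΩR x
  have hyoung := lintegral_kernel_young (μ.restrict Ω) (μ.restrict Ω)
    (K := fun x y => ENNReal.ofReal (‖x - y‖ ^ a)) (by fun_prop) hf.1.enorm hp hq hr hpqr hrow
    (fun y => by simpa only [norm_sub_rev] using hrow y)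
  rw [← ENNReal.ofReal_le_ofReal_iff (by positivity)]
  calc ENNReal.ofReal ((∫ x in Ω, |∫ y in Ω, ‖x - y‖ ^ a * f y ∂μ| ^ q ∂μ) ^ (1 / q))
      ≤ (∫⁻ x in Ω, ‖∫ y in Ω, ‖x - y‖ ^ a * f y ∂μ‖ₑ ^ q ∂μ) ^ (1 / q) :=
        ofReal_integral_abs_rpow_rpow_le _ _ hq
    _ ≤ (∫⁻ x in Ω, (∫⁻ y in Ω, ENNReal.ofReal (‖x - y‖ ^ a) * ‖f y‖ₑ ∂μ) ^ q ∂μ) ^ (1 / q) := by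
        gcongr with x
        refine (enorm_integral_le_lintegral_enorm _).trans_eq (lintegral_congr fun y => ?_)
        rw [enorm_mul, Real.enorm_of_nonneg (by positivity)]
    _ ≤ _ := hyoung
    _ = _ := by
        rw [ENNReal.ofReal_mul (Real.rpow_nonneg hM _),
          ENNReal.ofReal_rpow_of_nonneg hM (by positivity),
          hf.ofReal_integral_abs_rpow_rpow (μ.restrict Ω) (by linarith)]

end AddHaar

theorem riesz_constant_rpow {n ω V μ δ : ℝ} (hn : 0 < n) (hω : 0 < ω) (hV : 0 ≤ V)
    (hδμ : δ < μ) (hμ1 : μ ≤ 1) :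
    (ω * (n / (n + n * (μ - 1) * (1 - δ)⁻¹)
        * ((V / ω) ^ n⁻¹) ^ (n + n * (μ - 1) * (1 - δ)⁻¹))) ^ (1 / (1 - δ)⁻¹)
      = ((1 - δ) / (μ - δ)) ^ (1 - δ) * ω ^ (1 - μ) * V ^ (μ - δ) := by
  have ht : 0 < 1 - δ := by linarith
  have hs : 0 < μ - δ := by linarith
  have hexp : n + n * (μ - 1) * (1 - δ)⁻¹ = n * ((μ - δ) / (1 - δ)) := by field_simp; ring
  rw [hexp, one_div, inv_inv, ← Real.rpow_mul (by positivity), inv_mul_cancel_left₀ hn.ne',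
    show n / (n * ((μ - δ) / (1 - δ))) = (1 - δ) / (μ - δ) by field_simp,
    Real.mul_rpow hω.le (by positivity), Real.mul_rpow (by positivity) (by positivity),
    ← Real.rpow_mul (by positivity), div_mul_cancel₀ _ ht.ne', Real.div_rpow hV hω.le,
    show 1 - μ = (1 - δ) - (μ - δ) by ring, Real.rpow_sub hω (1 - δ) (μ - δ)]
  ring

open MeasureTheory in
theorem stmt_10_general (n : ℕ) (hn : 0 < n) (Ω : Set (EuclideanSpace ℝ (Fin n)))
    (hΩm : MeasurableSet Ω) (hΩfin : volume Ω < ⊤)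
    (μ : ℝ) (hμ1 : μ ≤ 1)
    (p q : ℝ) (hp : 1 ≤ p) (hpq : p ≤ q)
    (δ : ℝ) (hδ : δ = 1/p - 1/q) (hδ0 : 0 ≤ δ) (hδμ : δ < μ)
    (f : EuclideanSpace ℝ (Fin n) → ℝ)
    (hf : MemLp f (ENNReal.ofReal p) (volume.restrict Ω)) :
    (∫ x in Ω, |∫ y in Ω, ‖x - y‖ ^ ((n:ℝ) * (μ - 1)) * f y| ^ q) ^ (1/q)
      ≤ ((1 - δ) / (μ - δ)) ^ (1 - δ)
        * ((volume (Metric.ball (0 : EuclideanSpace ℝ (Fin n)) 1)).toReal) ^ (1 - μ)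
        * (volume Ω).toReal ^ (μ - δ)
        * (∫ x in Ω, |f x| ^ p) ^ (1/p) := by
  have hn' : (0 : ℝ) < n := by exact_mod_cast hn
  have ht : 0 < 1 - δ := by linarith
  have : Nontrivial (EuclideanSpace ℝ (Fin n)) :=
    Module.nontrivial_of_finrank_pos (R := ℝ) (by rwa [finrank_euclideanSpace_fin])
  have hpqr : 1 / p + 1 / (1 - δ)⁻¹ = 1 + 1 / q := by rw [one_div (1 - δ)⁻¹, inv_inv, hδ]; ring
  have hdar : -(n : ℝ) < n * (μ - 1) * (1 - δ)⁻¹ := by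
    have : -1 < (μ - 1) / (1 - δ) := by rw [lt_div_iff₀ ht]; linarith
    rw [mul_assoc, ← div_eq_mul_inv]; nlinarith
  have key := integral_abs_riesz_potential_rpow_le volume hΩm (a := n * (μ - 1)) (q := q)
    (by positivity) (addHaar_ball_rpow_inv_finrank_eq volume hΩfin.ne).ge hp (by linarith)
    ((one_le_inv₀ ht).mpr (by linarith)) hpqr
    (mul_nonpos_of_nonneg_of_nonpos hn'.le (by linarith))
    (by rwa [finrank_euclideanSpace_fin]) hf
  rw [finrank_euclideanSpace_fin, riesz_constant_rpow (ω := volume.real (ball 0 1))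
    (V := volume.real Ω) hn' (measureReal_ball_pos volume 0 one_pos) measureReal_nonneg
    hδμ hμ1] at key
  exact key

open MeasureTheory in
/-- bound for the Riesz potential `V_μ` with explicit constant
(Gilbarg–Trudinger Lemma 7.12). -/
theorem stmt_10 (n : ℕ) (hn : 0 < n) (Ω : Set (EuclideanSpace ℝ (Fin n)))
    (hΩm : MeasurableSet Ω) (hΩfin : volume Ω < ⊤)
    (μ : ℝ) (hμ0 : 0 < μ) (hμ1 : μ ≤ 1)
    (p q : ℝ) (hp : 1 ≤ p) (hpq : p ≤ q)
    (δ : ℝ) (hδ : δ = 1/p - 1/q) (hδ0 : 0 ≤ δ) (hδμ : δ < μ)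
    (f : EuclideanSpace ℝ (Fin n) → ℝ)
    (hf : MemLp f (ENNReal.ofReal p) (volume.restrict Ω)) :
    (∫ x in Ω, |∫ y in Ω, ‖x - y‖ ^ ((n:ℝ) * (μ - 1)) * f y| ^ q) ^ (1/q)
      ≤ ((1 - δ) / (μ - δ)) ^ (1 - δ)
        * ((volume (Metric.ball (0 : EuclideanSpace ℝ (Fin n)) 1)).toReal) ^ (1 - μ)
        * (volume Ω).toReal ^ (μ - δ)
        * (∫ x in Ω, |f x| ^ p) ^ (1/p) :=
  stmt_10_general n hn Ω hΩm hΩfin μ hμ1 p q hp hpq δ hδ hδ0 hδμ f hf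
end

section
/- Let f : Ω → ℝ be integrable on a cube K₀ ⊂ ℝⁿ and t > 0 with ∫_{K₀}|f| ≤ t|K₀|. Then there exists a countable collection of disjoint dyadic subcubes {Υ_l} of K₀ such that: (i) t < (1/|Υ_l|)∫_{Υ_l}|f| ≤ 2ⁿ t for each l, and (ii) |f| ≤ t almost everywhere on K₀ \ ∪_l Υ_l. -/
/-!
Cut `K₀` dyadically and follow, for each point `x`, the chain of dyadic cubes containing it;
stop at the first cube on which the mean of `|f|` exceeds `t`. Two such stopping cubes are
either equal or disjoint, since the stopping level is constant on a stopping cube. `K₀` itself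
is never stopped, so every stopping cube has a parent on which the mean is at most `t`; the
parent is `2ⁿ` times larger, giving the upper bound `2ⁿ t`. Off the union of the stopping cubes
every dyadic cube around `x` has mean at most `t`, and these cubes shrink to `x` regularly, so
Lebesgue's differentiation theorem gives `|f x| ≤ t` almost everywhere.
-/

open MeasureTheory Set Filter Topology

noncomputable section

variable {n : ℕ}

def halfOpenCube (a : Fin n → ℝ) (s : ℝ) : Set (Fin n → ℝ) :=
  univ.pi fun i => Ico (a i) (a i + s)

def AverageAbsExceeds (f : (Fin n → ℝ) → ℝ) (t : ℝ) (Q : Set (Fin n → ℝ)) : Prop :=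
  t * (volume Q).toReal < ∫ y in Q, |f y|

variable (a : Fin n → ℝ) (s : ℝ)

def dyadicIndex (k : ℕ) (x : Fin n → ℝ) : Fin n → ℤ :=
  fun i => ⌊(x i - a i) / (s / 2 ^ k)⌋

-- The dyadic grid of mesh `s / 2 ^ k` anchored at `a` covers all of `ℝⁿ`;
-- `dyadicCube a s k x` is its cell containing `x`.
def dyadicCube (k : ℕ) (x : Fin n → ℝ) : Set (Fin n → ℝ) :=
  {y | dyadicIndex a s k y = dyadicIndex a s k x}

def dyadicCenter (k : ℕ) (x : Fin n → ℝ) : Fin n → ℝ :=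
  fun i => a i + (dyadicIndex a s k x i + 1 / 2) * (s / 2 ^ k)

def IsStoppingLevel (P : Set (Fin n → ℝ) → Prop) (k : ℕ) (x : Fin n → ℝ) : Prop :=
  P (dyadicCube a s k x) ∧ ∀ m < k, ¬ P (dyadicCube a s m x)

-- For `P = AverageAbsExceeds f t` and `K = halfOpenCube a s` these are the cubes `Υ_l`:
-- the maximal dyadic subcubes of `K` on which `P` holds.
def stoppingCubes (P : Set (Fin n → ℝ) → Prop) (K : Set (Fin n → ℝ)) : Set (Set (Fin n → ℝ)) :=
  {Q | ∃ k, ∃ x ∈ K, IsStoppingLevel a s P k x ∧ dyadicCube a s k x = Q}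

variable {a s}

lemma mem_dyadicCube_self (k : ℕ) (x : Fin n → ℝ) : x ∈ dyadicCube a s k x := rfl

lemma dyadicCube_eq_of_mem {k : ℕ} {x y : Fin n → ℝ} (hy : y ∈ dyadicCube a s k x) :
    dyadicCube a s k y = dyadicCube a s k x := by
  ext z
  exact iff_of_eq (congrArg (_ = ·) hy)

lemma dyadicIndex_eq_ediv {k m : ℕ} (hkm : k ≤ m) (x : Fin n → ℝ) (i : Fin n) :
    dyadicIndex a s k x i = dyadicIndex a s m x i / 2 ^ (m - k) := by
  have hsplit : (2 : ℝ) ^ m = 2 ^ k * 2 ^ (m - k) := by rw [← pow_add, Nat.add_sub_cancel' hkm]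
  have hscale :
      (x i - a i) / (s / 2 ^ k) = (x i - a i) / (s / 2 ^ m) / ((2 ^ (m - k) : ℕ) : ℝ) := by
    push_cast
    rw [hsplit]
    field_simp
  simp only [dyadicIndex, hscale, Int.floor_div_natCast]
  push_cast
  rfl

lemma dyadicCube_subset_dyadicCube {k m : ℕ} (hkm : k ≤ m) (x : Fin n → ℝ) :
    dyadicCube a s m x ⊆ dyadicCube a s k x := fun y hy => by
  funext i
  rw [dyadicIndex_eq_ediv hkm, dyadicIndex_eq_ediv hkm x, hy]

lemma dyadicCube_eq_halfOpenCube (hs : 0 < s) (k : ℕ) (x : Fin n → ℝ) :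
    dyadicCube a s k x =
      halfOpenCube (fun i => a i + dyadicIndex a s k x i * (s / 2 ^ k)) (s / 2 ^ k) := by
  have hδ : 0 < s / 2 ^ k := by positivity
  ext y
  simp only [dyadicCube, halfOpenCube, mem_ofPred_eq, funext_iff, mem_univ_pi, mem_Ico, dyadicIndex,
    Int.floor_eq_iff, le_div_iff₀ hδ, div_lt_iff₀ hδ]
  refine forall_congr' fun i => ?_
  constructor <;> rintro ⟨h₁, h₂⟩ <;> constructor <;> linarith

lemma measurableSet_dyadicCube (hs : 0 < s) (k : ℕ) (x : Fin n → ℝ) :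
    MeasurableSet (dyadicCube a s k x) := by
  rw [dyadicCube_eq_halfOpenCube hs]
  exact .univ_pi fun _ => measurableSet_Ico

lemma volume_dyadicCube_toReal (hs : 0 < s) (k : ℕ) (x : Fin n → ℝ) :
    (volume (dyadicCube a s k x)).toReal = (s / 2 ^ k) ^ n := by
  have hδ : 0 < s / 2 ^ k := by positivity
  simp [dyadicCube_eq_halfOpenCube hs, halfOpenCube, volume_pi_pi, Real.volume_Ico, hδ.le]

lemma dyadicCube_zero (hs : 0 < s) {x : Fin n → ℝ} (hx : x ∈ halfOpenCube a s) :
    dyadicCube a s 0 x = halfOpenCube a s := by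
  have hidx : dyadicIndex a s 0 x = 0 := by
    funext i
    have := hx i (mem_univ i)
    simp only [dyadicIndex, pow_zero, div_one, Pi.zero_apply, Int.floor_eq_zero_iff, mem_Ico,
      le_div_iff₀ hs, div_lt_iff₀ hs]
    constructor <;> linarith [this.1, this.2]
  rw [dyadicCube_eq_halfOpenCube hs, hidx]
  simp

lemma dyadicCube_subset_halfOpenCube (hs : 0 < s) {k : ℕ} {x : Fin n → ℝ}
    (hx : x ∈ halfOpenCube a s) : dyadicCube a s k x ⊆ halfOpenCube a s :=
  dyadicCube_zero hs hx ▸ dyadicCube_subset_dyadicCube (Nat.zero_le k) x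

lemma countable_range_dyadicCube :
    (range fun p : ℕ × (Fin n → ℝ) => dyadicCube a s p.1 p.2).Countable := by
  refine (countable_range fun p : ℕ × (Fin n → ℤ) => {y | dyadicIndex a s p.1 y = p.2}).mono ?_
  rintro _ ⟨⟨k, x⟩, rfl⟩
  exact ⟨(k, dyadicIndex a s k x), rfl⟩

lemma dyadicCube_ae_eq_closedBall (hs : 0 < s) (k : ℕ) (x : Fin n → ℝ) :
    dyadicCube a s k x =ᵐ[volume] Metric.closedBall (dyadicCenter a s k x) (s / 2 ^ (k + 1)) := by
  -- closed balls of the sup metric on `Fin n → ℝ` are closed cubes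
  have hclosed : Metric.closedBall (dyadicCenter a s k x) (s / 2 ^ (k + 1)) =
      Icc (fun i => a i + dyadicIndex a s k x i * (s / 2 ^ k))
        (fun i => a i + dyadicIndex a s k x i * (s / 2 ^ k) + s / 2 ^ k) := by
    rw [closedBall_pi _ (by positivity), ← pi_univ_Icc]
    refine pi_congr rfl fun i _ => ?_
    rw [Real.closedBall_eq_Icc, dyadicCenter, pow_succ]
    congr 1 <;> ring
  rw [dyadicCube_eq_halfOpenCube hs, hclosed, volume_pi]
  exact Measure.univ_pi_Ico_ae_eq_Icc

lemma mem_closedBall_dyadicCenter (hs : 0 < s) (k : ℕ) (x : Fin n → ℝ) :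
    x ∈ Metric.closedBall (dyadicCenter a s k x) (s / 2 ^ (k + 1)) := by
  have hx : x ∈ dyadicCube a s k x := mem_dyadicCube_self k x
  rw [dyadicCube_eq_halfOpenCube hs] at hx
  rw [mem_closedBall_iff_norm, pi_norm_le_iff_of_nonneg (by positivity)]
  intro i
  obtain ⟨h₁, h₂⟩ := hx i (mem_univ i)
  rw [Pi.sub_apply, Real.norm_eq_abs, abs_sub_le_iff, dyadicCenter, pow_succ, ← div_div]
  constructor <;> linarith

theorem ae_tendsto_setAverage_dyadicCube (hs : 0 < s) {E : Type*} [NormedAddCommGroup E]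
    [NormedSpace ℝ E] [CompleteSpace E] {g : (Fin n → ℝ) → E} (hg : LocallyIntegrable g) :
    ∀ᵐ x, Tendsto (fun k => ⨍ y in dyadicCube a s k x, g y) atTop (𝓝 (g x)) := by
  have hradius : Tendsto (fun k : ℕ => s / 2 ^ (k + 1)) atTop (𝓝[>] 0) := by
    refine tendsto_nhdsWithin_iff.2 ⟨?_, .of_forall fun k => mem_Ioi.2 (by positivity)⟩
    exact tendsto_const_nhds.div_atTop
      ((tendsto_pow_atTop_atTop_of_one_lt one_lt_two).comp (tendsto_add_atTop_nat 1))
  filter_upwards [IsUnifLocDoublingMeasure.ae_tendsto_average volume hg 1] with x hx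
  refine (hx (fun k => dyadicCenter a s k x) _ hradius (.of_forall fun k => ?_)).congr fun k => ?_
  · rw [one_mul]
    exact mem_closedBall_dyadicCenter hs k x
  · exact setAverage_congr (dyadicCube_ae_eq_closedBall hs k x).symm

theorem ae_restrict_le_of_setIntegral_dyadicCube_le (hs : 0 < s) {g : (Fin n → ℝ) → ℝ}
    (hg : LocallyIntegrable g) {A : Set (Fin n → ℝ)} (hA : MeasurableSet A) {t : ℝ}
    (h : ∀ x ∈ A, ∀ k, ∫ y in dyadicCube a s k x, g y ≤ t * (volume (dyadicCube a s k x)).toReal) :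
    ∀ᵐ x ∂volume.restrict A, g x ≤ t := by
  rw [ae_restrict_iff' hA]
  filter_upwards [ae_tendsto_setAverage_dyadicCube hs hg] with x hx hxA
  refine le_of_tendsto' hx fun k => ?_
  have hvol : 0 < (volume (dyadicCube a s k x)).toReal := by
    rw [volume_dyadicCube_toReal hs]; positivity
  rw [setAverage_eq, measureReal_def, smul_eq_mul, inv_mul_le_iff₀ hvol, mul_comm]
  exact h x hxA k

section Stopping

variable {P : Set (Fin n → ℝ) → Prop} {K : Set (Fin n → ℝ)} {k m : ℕ} {x y : Fin n → ℝ}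

lemma IsStoppingLevel.of_mem (h : IsStoppingLevel a s P k x) (hy : y ∈ dyadicCube a s k x) :
    IsStoppingLevel a s P k y := by
  have hsame : ∀ m ≤ k, dyadicCube a s m y = dyadicCube a s m x := fun m hm =>
    dyadicCube_eq_of_mem (dyadicCube_subset_dyadicCube hm x hy)
  exact ⟨hsame k le_rfl ▸ h.1, fun m hm => hsame m hm.le ▸ h.2 m hm⟩

lemma IsStoppingLevel.unique (hk : IsStoppingLevel a s P k x) (hm : IsStoppingLevel a s P m x) :
    k = m := by
  by_contra hne
  rcases Nat.lt_or_gt_of_ne hne with hlt | hlt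
  · exact hm.2 k hlt hk.1
  · exact hk.2 m hlt hm.1

lemma exists_isStoppingLevel (h : ∃ k, P (dyadicCube a s k x)) :
    ∃ k, IsStoppingLevel a s P k x := by
  classical
  exact ⟨Nat.find h, Nat.find_spec h, fun _ hm => Nat.find_min h hm⟩

lemma countable_stoppingCubes : (stoppingCubes a s P K).Countable :=
  countable_range_dyadicCube.mono <| by
    rintro _ ⟨k, x, -, -, rfl⟩
    exact ⟨(k, x), rfl⟩

lemma pairwiseDisjoint_stoppingCubes : (stoppingCubes a s P K).PairwiseDisjoint id := by
  rintro _ ⟨k, x, -, hk, rfl⟩ _ ⟨m, x', -, hm, rfl⟩ hne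
  refine disjoint_left.2 fun y hy hy' => hne ?_
  obtain rfl := (hk.of_mem hy).unique (hm.of_mem hy')
  rw [← dyadicCube_eq_of_mem hy, dyadicCube_eq_of_mem hy']

lemma mem_sUnion_stoppingCubes (hx : x ∈ K) (hP : P (dyadicCube a s k x)) :
    x ∈ ⋃₀ stoppingCubes a s P K := by
  obtain ⟨m, hm⟩ := exists_isStoppingLevel ⟨k, hP⟩
  exact ⟨_, ⟨m, x, hx, hm, rfl⟩, mem_dyadicCube_self m x⟩

end Stopping

section CalderonZygmund

variable {f : (Fin n → ℝ) → ℝ} {t : ℝ}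

lemma setIntegral_abs_le_of_isStoppingLevel (hs : 0 < s) (hf : IntegrableOn f (halfOpenCube a s))
    (havg : ∫ x in halfOpenCube a s, |f x| ≤ t * (volume (halfOpenCube a s)).toReal)
    {k : ℕ} {x : Fin n → ℝ} (hx : x ∈ halfOpenCube a s)
    (hk : IsStoppingLevel a s (AverageAbsExceeds f t) k x) :
    ∫ y in dyadicCube a s k x, |f y| ≤ 2 ^ n * t * (volume (dyadicCube a s k x)).toReal := by
  obtain ⟨m, rfl⟩ : ∃ m, k = m + 1 := by
    refine Nat.exists_eq_succ_of_ne_zero fun hk0 => ?_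
    have hbad := hk.1
    rw [hk0, dyadicCube_zero hs hx] at hbad
    exact (havg.trans_lt hbad).false
  calc ∫ y in dyadicCube a s (m + 1) x, |f y|
      ≤ ∫ y in dyadicCube a s m x, |f y| :=
        setIntegral_mono_set (hf.mono_set (dyadicCube_subset_halfOpenCube hs hx)).abs
          (.of_forall fun _ => abs_nonneg _)
          (dyadicCube_subset_dyadicCube m.le_succ x).eventuallyLE
    _ ≤ t * (volume (dyadicCube a s m x)).toReal := not_lt.1 (hk.2 m m.lt_succ_self)
    _ = 2 ^ n * t * (volume (dyadicCube a s (m + 1) x)).toReal := by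
        rw [volume_dyadicCube_toReal hs, volume_dyadicCube_toReal hs, pow_succ, ← div_div,
          div_pow _ 2]
        field_simp

lemma ae_abs_le_on_diff_sUnion_stoppingCubes (hs : 0 < s)
    (hf : IntegrableOn f (halfOpenCube a s)) :
    ∀ᵐ x ∂volume.restrict
      (halfOpenCube a s \ ⋃₀ stoppingCubes a s (AverageAbsExceeds f t) (halfOpenCube a s)),
      |f x| ≤ t := by
  set K₀ := halfOpenCube a s
  set A := K₀ \ ⋃₀ stoppingCubes a s (AverageAbsExceeds f t) K₀
  have hK₀ : MeasurableSet K₀ := .univ_pi fun _ => measurableSet_Ico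
  have hA : MeasurableSet A :=
    hK₀.diff <| .sUnion countable_stoppingCubes <| by
      rintro _ ⟨k, x, -, -, rfl⟩
      exact measurableSet_dyadicCube hs k x
  have hg : LocallyIntegrable (K₀.indicator fun x => |f x|) :=
    (IntegrableOn.integrable_indicator hf.abs hK₀).locallyIntegrable
  have hbound : ∀ x ∈ A, ∀ k, ∫ y in dyadicCube a s k x, K₀.indicator (fun x => |f x|) y ≤
      t * (volume (dyadicCube a s k x)).toReal := by
    intro x hx k
    rw [setIntegral_congr_fun (measurableSet_dyadicCube hs k x)
      fun y hy => indicator_of_mem (dyadicCube_subset_halfOpenCube hs hx.1 hy) _]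
    exact not_lt.1 fun hbad => hx.2 (mem_sUnion_stoppingCubes hx.1 hbad)
  filter_upwards [ae_restrict_le_of_setIntegral_dyadicCube_le hs hg hA hbound,
    ae_restrict_mem hA] with x hx hxA
  rwa [indicator_of_mem hxA.1] at hx

end CalderonZygmund

end

open MeasureTheory in
theorem stmt_16_general (n : ℕ) (a : Fin n → ℝ) (s : ℝ) (hs : 0 < s)
    (K₀ : Set (Fin n → ℝ)) (hK₀ : K₀ = Set.univ.pi (fun i => Set.Ico (a i) (a i + s)))
    (f : (Fin n → ℝ) → ℝ) (hf : IntegrableOn f K₀)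
    (t : ℝ) (havg : ∫ x in K₀, |f x| ≤ t * (volume K₀).toReal) :
    ∃ (ι : Type) (_ : Countable ι) (Υ : ι → Set (Fin n → ℝ)),
      Pairwise (Function.onFun Disjoint Υ)
      ∧ (∀ l, Υ l ⊆ K₀)
      ∧ (∀ l, ∃ (c : Fin n → ℝ) (r : ℝ), 0 < r
            ∧ Υ l = Set.univ.pi (fun i => Set.Ico (c i) (c i + r)))
      ∧ (∀ l, t * (volume (Υ l)).toReal < ∫ x in Υ l, |f x|
            ∧ ∫ x in Υ l, |f x| ≤ 2^n * t * (volume (Υ l)).toReal)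
      ∧ (∀ᵐ x ∂(volume.restrict (K₀ \ ⋃ l, Υ l)), |f x| ≤ t) := by
  subst hK₀
  set S := stoppingCubes a s (AverageAbsExceeds f t) (halfOpenCube a s)
  refine ⟨S, countable_stoppingCubes.to_subtype, Subtype.val,
    pairwiseDisjoint_stoppingCubes.subtype _ _, ?_, ?_, ?_, ?_⟩
  · rintro ⟨_, k, x, hx, -, rfl⟩
    exact dyadicCube_subset_halfOpenCube hs hx
  · rintro ⟨_, k, x, -, -, rfl⟩
    exact ⟨_, _, by positivity, dyadicCube_eq_halfOpenCube hs k x⟩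
  · rintro ⟨_, k, x, hx, hk, rfl⟩
    exact ⟨hk.1, setIntegral_abs_le_of_isStoppingLevel hs hf havg hx hk⟩
  · rw [← sUnion_eq_iUnion]
    exact ae_abs_le_on_diff_sUnion_stoppingCubes hs hf

open MeasureTheory in
/-- Calderón–Zygmund cube decomposition. -/
theorem stmt_16 (n : ℕ) (hn : 0 < n) (a : Fin n → ℝ) (s : ℝ) (hs : 0 < s)
    (K₀ : Set (Fin n → ℝ)) (hK₀ : K₀ = Set.univ.pi (fun i => Set.Ico (a i) (a i + s)))
    (f : (Fin n → ℝ) → ℝ) (hf : IntegrableOn f K₀)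
    (t : ℝ) (ht : 0 < t) (havg : ∫ x in K₀, |f x| ≤ t * (volume K₀).toReal) :
    ∃ (ι : Type) (_ : Countable ι) (Υ : ι → Set (Fin n → ℝ)),
      Pairwise (Function.onFun Disjoint Υ)
      ∧ (∀ l, Υ l ⊆ K₀)
      ∧ (∀ l, ∃ (c : Fin n → ℝ) (r : ℝ), 0 < r
            ∧ Υ l = Set.univ.pi (fun i => Set.Ico (c i) (c i + r)))
      ∧ (∀ l, t * (volume (Υ l)).toReal < ∫ x in Υ l, |f x|
            ∧ ∫ x in Υ l, |f x| ≤ 2^n * t * (volume (Υ l)).toReal)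
      ∧ (∀ᵐ x ∂(volume.restrict (K₀ \ ⋃ l, Υ l)), |f x| ≤ t) :=
  stmt_16_general n a s hs K₀ hK₀ f hf t havg
end
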